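/- For every δ ∈ (0,1) there exists a constant C > 0 such that for all L ≥ r ≥ 1, all z ∈ [0, L − r], all M ∈ [0, ∞) and all k, l ∈ ℕ₀: (i) if k ≠ l, or if k = l and k ≤ rM/L, then |∑_{m ∈ ℕ₀, m ≥ M} b_{m,k}^z b_{m,l}^z| ≤ C [(1 + |k − rM/L|)^{δ−1} + (1 + |l − rM/L|)^{δ−1}]; and (ii) if k ≠ l, or if k = l and k ≥ rM/L, then |∑_{m ∈ ℕ₀, m < M} b_{m,k}^z b_{m,l}^z| ≤ C [(1 + |k − rM/L|)^{δ−1} + (1 + |l − rM/L|)^{δ−1}]. -/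

import Mathlib

open MeasureTheory Real

/-- `ν_k = 1` for `k ≥ 1` and `ν₀ = 2^{−1/2}`. -/
noncomputable def nu (k : ℕ) : ℝ := if k = 0 then 1 / Real.sqrt 2 else 1

/-- The Neumann basis function `𝔫_{k,s}(x) = ν_k √(2/s) cos(π k x / s)` on `[0,s]`. -/
noncomputable def nfun (s : ℝ) (k : ℕ) (x : ℝ) : ℝ :=
  nu k * Real.sqrt (2 / s) * Real.cos (π * (k : ℝ) * x / s)

/-- `b_{m,l}^z = ∫₀^r 𝔫_{m,L}(x + z) 𝔫_{l,r}(x) dx`. -/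
noncomputable def bcoef (L r z : ℝ) (m l : ℕ) : ℝ :=
  ∫ x in Set.Icc (0 : ℝ) r, nfun L m (x + z) * nfun r l x

/-!
The Neumann functions `𝔫_{m,L}` form a Hilbert basis of `L²[0, L]` (Stone–Weierstrass for the
span of the cosines, which is an algebra by the product-to-sum formula), and `b_{m,l}^z` is the
`m`-th coefficient of `𝔫_{l,r}(· - z)` extended by zero, so Parseval gives
`∑_m b_{m,k}^z b_{m,l}^z = δ_{k,l}`. Writing the product of two cosines as a sum and integrating
gives `|b_{m,k}^z| ≤ 4 √α / (1 + |m α - k|)` with `α = r / L ≤ 1`.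

Put `μ = r M / L = M α` and `w = 1 + |k - μ|`. If every index `m` of a partial sum has
`|m α - k| ≥ |k - μ|`, then `u⁻¹ v⁻¹ ≤ w^(δ-1) (u^(-1-δ) + v^(-1-δ))` for
`u = 1 + |m α - k| ≥ w` and `v = 1 + |m α - l|`, and the grid sums
`∑_m α (1 + |m α - a|)^(-1-δ)` are bounded independently of `α` and `a`; this bounds the
partial sum by `C w^(δ-1)`. The condition holds for the tail `m ≥ M` when `k ≤ μ` and for the
head `m < M` when `k ≥ μ`, and symmetrically for `l`. In the remaining case `k ≠ l`, so by
Parseval the tail is minus the head, for which the condition holds.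
-/

section GridSums

open Finset

lemma mul_sub_mul_rpow_le_rpow_neg_sub_rpow_neg {q x y : ℝ} (hq : 0 < q) (hx : 0 < x)
    (hxy : x ≤ y) : q * (y - x) * y ^ (-(1 + q)) ≤ x ^ (-q) - y ^ (-q) := by
  have h := (convex_Icc x y).image_sub_le_mul_sub_of_deriv_le (f := fun t : ℝ => t ^ (-q))
    (C := -q * y ^ (-(1 + q))) ?_ ?_ ?_ x (Set.left_mem_Icc.2 hxy) y (Set.right_mem_Icc.2 hxy) hxy
  · linarith
  · exact continuousOn_id.rpow_const fun t ht => Or.inl (hx.trans_le ht.1).ne'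
  · rw [interior_Icc]
    exact fun t ht =>
      (differentiableAt_rpow_const_of_ne _ (hx.trans ht.1).ne').differentiableWithinAt
  · rw [interior_Icc]
    intro t ht
    rw [Real.deriv_rpow_const, show -q - 1 = -(1 + q) by ring, neg_mul, neg_mul, neg_le_neg_iff]
    exact mul_le_mul_of_nonneg_left
      (rpow_le_rpow_of_nonpos (hx.trans ht.1) ht.2.le (by linarith)) hq.le

lemma sum_range_mul_rpow_one_add_mul_le {q α : ℝ} (hq : 0 < q) (hα : 0 < α) (hα1 : α ≤ 1)
    (N : ℕ) : ∑ i ∈ range N, α * (1 + i * α) ^ (-(1 + q)) ≤ 1 + 1 / q := by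
  suffices h : ∀ n : ℕ, ∑ i ∈ range (n + 1), α * (1 + i * α) ^ (-(1 + q)) ≤
      1 + (1 - (1 + n * α) ^ (-q)) / q by
    rcases N with _ | n
    · rw [sum_range_zero]; positivity
    · refine (h n).trans ?_
      gcongr
      linarith [rpow_nonneg (by positivity : (0:ℝ) ≤ 1 + n * α) (-q)]
  intro n
  induction n with
  | zero => simpa using hα1
  | succ n ih =>
    have step := mul_sub_mul_rpow_le_rpow_neg_sub_rpow_neg hq (x := 1 + n * α)
      (y := 1 + (n + 1) * α) (by positivity) (by linarith)
    rw [show 1 + (n + 1) * α - (1 + n * α) = α by ring] at step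
    rw [sum_range_succ]
    push_cast
    calc _ ≤ 1 + (1 - (1 + n * α) ^ (-q)) / q +
          ((1 + n * α) ^ (-q) - (1 + (n + 1) * α) ^ (-q)) / q :=
          add_le_add ih ((le_div_iff₀ hq).2 (by linarith))
      _ = _ := by ring

lemma mul_rpow_one_add_abs_le {q α a : ℝ} (hq : 0 < q) (hα : 0 < α) {m i : ℕ}
    (h : i * α ≤ |m * α - a|) :
    α * (1 + |m * α - a|) ^ (-(1 + q)) ≤ α * (1 + i * α) ^ (-(1 + q)) :=
  mul_le_mul_of_nonneg_left
    (rpow_le_rpow_of_nonpos (by positivity) (by linarith) (by linarith)) hα.le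

lemma summable_and_tsum_le_of_le_reflect {f g : ℕ → ℝ} {B : ℝ} (c : ℕ) (hf : ∀ m, 0 ≤ f m)
    (hg : ∀ i, 0 ≤ g i) (hgB : ∀ n, ∑ i ∈ range n, g i ≤ B) (hright : ∀ i, f (i + c) ≤ g i)
    (hleft : ∀ m < c, f m ≤ g (c - 1 - m)) :
    Summable f ∧ ∑' m, f m ≤ 2 * B := by
  have hgs : Summable g := summable_of_sum_range_le hg hgB
  have hshift : Summable fun i => f (i + c) := hgs.of_nonneg_of_le (fun _ => hf _) hright
  refine ⟨(summable_nat_add_iff c).1 hshift, ?_⟩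
  rw [← hshift.sum_add_tsum_nat_add', two_mul]
  calc ∑ m ∈ range c, f m + ∑' i, f (i + c)
      ≤ ∑ m ∈ range c, g (c - 1 - m) + ∑' i, g i :=
        add_le_add (sum_le_sum fun m hm => hleft m (mem_range.1 hm))
          (hshift.tsum_le_tsum hright hgs)
    _ ≤ B + B := by
        rw [sum_range_reflect g c]
        exact add_le_add (hgB c) (Real.tsum_le_of_sum_range_le hg hgB)

lemma summable_and_tsum_mul_rpow_one_add_abs_le {q α : ℝ} (hq : 0 < q) (hα : 0 < α)
    (hα1 : α ≤ 1) (a : ℝ) :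
    Summable (fun m : ℕ => α * (1 + |m * α - a|) ^ (-(1 + q))) ∧
      ∑' m : ℕ, α * (1 + |m * α - a|) ^ (-(1 + q)) ≤ 2 * (1 + 1 / q) := by
  -- The grid points `m * α` with `m ≥ c` lie to the right of `a`, the others to its left.
  obtain ⟨c, hc⟩ : ∃ c, c = ⌈a / α⌉₊ := ⟨_, rfl⟩
  refine summable_and_tsum_le_of_le_reflect c (fun _ => by positivity) (fun _ => by positivity)
    (sum_range_mul_rpow_one_add_mul_le hq hα hα1) (fun i => ?_) (fun m hmc => ?_)
  · have hca : a ≤ c * α := (div_le_iff₀ hα).1 (hc ▸ Nat.le_ceil _)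
    exact mul_rpow_one_add_abs_le hq hα (le_abs.2 (Or.inl (by push_cast; linarith)))
  · have hlt : ((c - 1 : ℕ) : ℝ) * α < a := (lt_div_iff₀ hα).1 (Nat.lt_ceil.1 (by omega))
    refine mul_rpow_one_add_abs_le hq hα (le_abs.2 (Or.inr ?_))
    rw [Nat.cast_sub (by omega : 1 ≤ c)] at hlt
    rw [Nat.sub_sub, Nat.cast_sub (by omega : 1 + m ≤ c)]
    push_cast at hlt ⊢
    linarith

end GridSums

lemma rpow_neg_mul_inv_le {δ u v : ℝ} (hδ : 0 ≤ δ) (hu : 0 < u) (hv : 0 < v) :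
    u ^ (-δ) * v⁻¹ ≤ u ^ (-(1 + δ)) + v ^ (-(1 + δ)) := by
  rcases le_total u v with huv | hvu
  · calc u ^ (-δ) * v⁻¹ ≤ u ^ (-δ) * u ^ (-1 : ℝ) := by
          rw [rpow_neg_one]; gcongr
      _ = u ^ (-(1 + δ)) := by rw [← rpow_add hu]; ring_nf
      _ ≤ _ := le_add_of_nonneg_right (by positivity)
  · calc u ^ (-δ) * v⁻¹ ≤ v ^ (-δ) * v ^ (-1 : ℝ) := by
          rw [rpow_neg_one]
          exact mul_le_mul_of_nonneg_right (rpow_le_rpow_of_nonpos hv hvu (by linarith))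
            (by positivity)
      _ = v ^ (-(1 + δ)) := by rw [← rpow_add hv]; ring_nf
      _ ≤ _ := le_add_of_nonneg_left (by positivity)

lemma inv_mul_inv_le_rpow_mul {δ u v w : ℝ} (hδ0 : 0 ≤ δ) (hδ1 : δ ≤ 1) (hw : 0 < w)
    (hwu : w ≤ u) (hv : 0 < v) :
    u⁻¹ * v⁻¹ ≤ w ^ (δ - 1) * (u ^ (-(1 + δ)) + v ^ (-(1 + δ))) := by
  have hu : 0 < u := hw.trans_le hwu
  calc u⁻¹ * v⁻¹ = u ^ (δ - 1) * (u ^ (-δ) * v⁻¹) := by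
        rw [← mul_assoc, ← rpow_add hu, ← rpow_neg_one]; ring_nf
    _ ≤ w ^ (δ - 1) * (u ^ (-(1 + δ)) + v ^ (-(1 + δ))) :=
        mul_le_mul (rpow_le_rpow_of_nonpos hw hwu (by linarith)) (rpow_neg_mul_inv_le hδ0 hu hv)
          (by positivity) (by positivity)

lemma integral_cos_pi_mul_div_add {r u : ℝ} (hr : r ≠ 0) (hu : u ≠ 0) (φ : ℝ) :
    ∫ x in (0:ℝ)..r, cos (π * u * x / r + φ) = r / (π * u) * (sin (π * u + φ) - sin φ) := by
  have hc : π * u / r ≠ 0 := by positivity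
  have := intervalIntegral.integral_comp_mul_add cos hc φ (a := 0) (b := r)
  simp only [mul_zero, zero_add, div_mul_cancel₀ _ hr, integral_cos, smul_eq_mul, inv_div]
    at this
  rw [← this]
  congr 1 with x
  ring_nf

lemma abs_integral_cos_pi_mul_div_add_le {r : ℝ} (hr : 0 < r) (u φ : ℝ) :
    |∫ x in (0:ℝ)..r, cos (π * u * x / r + φ)| ≤ 2 * r / (1 + |u|) := by
  rcases le_or_gt |u| 1 with hu1 | hu1
  · calc |∫ x in (0:ℝ)..r, cos (π * u * x / r + φ)| ≤ 1 * |r - 0| :=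
          intervalIntegral.norm_integral_le_of_norm_le_const (f := fun x => cos (π * u * x / r + φ))
            fun x _ => abs_cos_le_one _
      _ ≤ 2 * r / (1 + |u|) := by
          rw [sub_zero, abs_of_pos hr, le_div_iff₀ (by positivity)]; nlinarith
  · have hu : u ≠ 0 := by rintro rfl; norm_num at hu1
    rw [integral_cos_pi_mul_div_add hr.ne' hu, abs_mul, abs_div, abs_mul, abs_of_pos hr,
      abs_of_pos pi_pos]
    have hsin : |sin (π * u + φ) - sin φ| ≤ 2 :=
      (abs_sub _ _).trans (by linarith [abs_sin_le_one (π * u + φ), abs_sin_le_one φ])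
    calc r / (π * |u|) * |sin (π * u + φ) - sin φ| ≤ r / (π * |u|) * 2 := by gcongr
      _ = 2 * r / (π * |u|) := by ring
      _ ≤ 2 * r / (1 + |u|) := by gcongr; nlinarith [pi_gt_three]

lemma integral_cos_pi_int_mul_div {s : ℝ} (hs : 0 < s) (n : ℤ) :
    ∫ x in (0:ℝ)..s, cos (π * n * x / s) = if n = 0 then s else 0 := by
  split_ifs with hn
  · simp [hn]
  · simpa [mul_comm π, sin_int_mul_pi] using
      integral_cos_pi_mul_div_add hs.ne' (by exact_mod_cast hn : (n : ℝ) ≠ 0) 0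

lemma nu_pos (k : ℕ) : 0 < nu k := by
  unfold nu; split_ifs <;> positivity

lemma nu_le_one (k : ℕ) : nu k ≤ 1 := by
  unfold nu
  split_ifs
  · rw [div_le_one (by positivity), one_le_sqrt]; norm_num
  · exact le_rfl

lemma nu_mul_self (k : ℕ) : nu k * nu k = if k = 0 then 1 / 2 else 1 := by
  unfold nu
  split_ifs
  · rw [div_mul_div_comm, mul_self_sqrt zero_le_two, one_mul]
  · exact one_mul 1

lemma nfun_mul_nfun {L r : ℝ} (hL : L ≠ 0) (hr : r ≠ 0) (z x : ℝ) (m k : ℕ) :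
    nfun L m (x + z) * nfun r k x = nu m * nu k * √(2 / L) * √(2 / r) / 2 *
      (cos (π * (m * (r / L) - k) * x / r + π * m * z / L) +
        cos (π * (m * (r / L) + k) * x / r + π * m * z / L)) := by
  have e1 : π * (m * (r / L) - k) * x / r + π * m * z / L =
      π * m * (x + z) / L - π * k * x / r := by field_simp; ring
  have e2 : π * (m * (r / L) + k) * x / r + π * m * z / L =
      π * m * (x + z) / L + π * k * x / r := by field_simp; ring
  rw [e1, e2, cos_sub, cos_add, nfun, nfun]
  ring

lemma bcoef_eq_integral_cos {L r : ℝ} (hL : L ≠ 0) (hr : 0 < r) (z : ℝ) (m k : ℕ) :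
    bcoef L r z m k = nu m * nu k * √(2 / L) * √(2 / r) / 2 *
      ((∫ x in (0:ℝ)..r, cos (π * (m * (r / L) - k) * x / r + π * m * z / L)) +
        ∫ x in (0:ℝ)..r, cos (π * (m * (r / L) + k) * x / r + π * m * z / L)) := by
  rw [bcoef, integral_Icc_eq_integral_Ioc, ← intervalIntegral.integral_of_le hr.le]
  simp_rw [nfun_mul_nfun hL hr.ne']
  rw [intervalIntegral.integral_const_mul, intervalIntegral.integral_add
    (by apply Continuous.intervalIntegrable; fun_prop)
    (by apply Continuous.intervalIntegrable; fun_prop)]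

lemma integral_nfun_mul_nfun {s : ℝ} (hs : 0 < s) (k l : ℕ) :
    ∫ x in Set.Icc 0 s, nfun s k x * nfun s l x = if k = l then 1 else 0 := by
  have h := bcoef_eq_integral_cos hs.ne' hs 0 k l
  have e1 : (k : ℝ) * (s / s) - l = ((k - l : ℤ) : ℝ) := by
    rw [div_self hs.ne']; push_cast; ring
  have e2 : (k : ℝ) * (s / s) + l = ((k + l : ℤ) : ℝ) := by
    rw [div_self hs.ne']; push_cast; ring
  simp only [bcoef, add_zero, mul_zero, zero_div, e1, e2, integral_cos_pi_int_mul_div hs] at h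
  rw [h, mul_assoc (nu k * nu l), mul_self_sqrt (by positivity)]
  rcases eq_or_ne k l with rfl | hkl
  · rcases eq_or_ne k 0 with rfl | hk
    · simp only [nu_mul_self, ↓reduceIte, CharP.cast_eq_zero, sub_self, add_zero]
      field_simp
      ring
    · have : (k : ℤ) + k ≠ 0 := by omega
      simp only [nu_mul_self, hk, ↓reduceIte, sub_self, this, add_zero]
      field_simp
  · have h1 : (k : ℤ) - l ≠ 0 := by omega
    have h2 : (k : ℤ) + l ≠ 0 := by omega
    simp [hkl, h1, h2]

lemma abs_bcoef_le {L r : ℝ} (hr : 0 < r) (hL : 0 < L) (z : ℝ) (m k : ℕ) :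
    |bcoef L r z m k| ≤ 4 * √(r / L) / (1 + |m * (r / L) - k|) := by
  set u := (m : ℝ) * (r / L) - k
  have hI₁ := abs_integral_cos_pi_mul_div_add_le hr u (π * m * z / L)
  have hI₂ := abs_integral_cos_pi_mul_div_add_le hr (m * (r / L) + k) (π * m * z / L)
  have hu : |u| ≤ |(m : ℝ) * (r / L) + k| := by
    rw [abs_of_nonneg (by positivity : (0 : ℝ) ≤ m * (r / L) + k)]
    exact abs_sub_le_iff.2 ⟨by linarith, by nlinarith [(by positivity : (0 : ℝ) ≤ m * (r / L))]⟩
  have hI₂' : |∫ x in (0:ℝ)..r, cos (π * (m * (r / L) + k) * x / r + π * m * z / L)| ≤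
      2 * r / (1 + |u|) := hI₂.trans (by gcongr)
  have hnu : nu m * nu k ≤ 1 := mul_le_one₀ (nu_le_one m) (nu_pos k).le (nu_le_one k)
  have hsq : √(2 / L) * √(2 / r) * r = 2 * √(r / L) := by
    rw [← sq_eq_sq₀ (by positivity) (by positivity)]
    simp only [mul_pow, sq_sqrt (by positivity : (0 : ℝ) ≤ 2 / L),
      sq_sqrt (by positivity : (0 : ℝ) ≤ 2 / r), sq_sqrt (by positivity : (0 : ℝ) ≤ r / L)]
    field_simp
  have hν := mul_pos (nu_pos m) (nu_pos k)
  rw [bcoef_eq_integral_cos hL.ne' hr, abs_mul, abs_of_nonneg (by positivity)]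
  calc nu m * nu k * √(2 / L) * √(2 / r) / 2 * |_ + _|
      ≤ 1 * √(2 / L) * √(2 / r) / 2 * (2 * r / (1 + |u|) + 2 * r / (1 + |u|)) := by
        gcongr; exact (abs_add_le _ _).trans (add_le_add hI₁ hI₂')
    _ = 2 * (√(2 / L) * √(2 / r) * r) / (1 + |u|) := by ring
    _ = 4 * √(r / L) / (1 + |u|) := by rw [hsq]; ring

lemma continuous_nfun (s : ℝ) (k : ℕ) : Continuous (nfun s k) := by
  unfold nfun; fun_prop

lemma abs_nfun_le (s : ℝ) (k : ℕ) (x : ℝ) : |nfun s k x| ≤ √(2 / s) := by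
  rw [nfun, abs_mul, abs_mul, abs_of_pos (nu_pos k), abs_of_nonneg (sqrt_nonneg _)]
  calc nu k * √(2 / s) * |cos (π * k * x / s)| ≤ 1 * √(2 / s) * 1 := by
        gcongr
        exacts [nu_le_one k, abs_cos_le_one _]
    _ = √(2 / s) := by ring

noncomputable def shiftedNfun (r z : ℝ) (j : ℕ) : ℝ → ℝ :=
  (Set.Icc z (z + r)).indicator fun y => nfun r j (y - z)

lemma abs_shiftedNfun_le (r z : ℝ) (j : ℕ) (y : ℝ) : |shiftedNfun r z j y| ≤ √(2 / r) := by
  by_cases hy : y ∈ Set.Icc z (z + r)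
  · simpa only [shiftedNfun, Set.indicator_of_mem hy] using abs_nfun_le r j _
  · simp only [shiftedNfun, Set.indicator_of_notMem hy, abs_zero]; positivity

lemma shiftedNfun_add {r x : ℝ} (z : ℝ) (j : ℕ) (hx : x ∈ Set.Icc 0 r) :
    shiftedNfun r z j (x + z) = nfun r j x := by
  have hxz : x + z ∈ Set.Icc z (z + r) := ⟨by linarith [hx.1], by linarith [hx.2]⟩
  rw [shiftedNfun, Set.indicator_of_mem hxz, add_sub_cancel_right]

lemma setIntegral_Icc_mul_shiftedNfun {L r z : ℝ} (hz : 0 ≤ z) (hzL : z + r ≤ L) (hr : 0 ≤ r)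
    (f : ℝ → ℝ) (j : ℕ) :
    ∫ y in Set.Icc 0 L, f y * shiftedNfun r z j y = ∫ x in Set.Icc 0 r, f (x + z) * nfun r j x := by
  simp_rw [shiftedNfun, ← Set.indicator_mul_right]
  rw [setIntegral_indicator measurableSet_Icc,
    Set.inter_eq_self_of_subset_right (Set.Icc_subset_Icc hz hzL), integral_Icc_eq_integral_Ioc,
    integral_Icc_eq_integral_Ioc, ← intervalIntegral.integral_of_le (by linarith),
    ← intervalIntegral.integral_of_le hr]
  have := intervalIntegral.integral_comp_add_right (a := 0) (b := r)
    (fun y => f y * nfun r j (y - z)) z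
  simp only [add_sub_cancel_right, zero_add] at this
  rw [this, add_comm r z]

section NeumannBasis

attribute [local instance] Measure.Subtype.measureSpace

variable {L : ℝ}

instance : IsFiniteMeasure (volume : Measure (Set.Icc (0 : ℝ) L)) :=
  ⟨by rw [Measure.Subtype.volume_univ nullMeasurableSet_Icc, Real.volume_Icc]
      exact ENNReal.ofReal_lt_top⟩

lemma inner_eq_setIntegral_Icc {u v : Lp ℝ 2 (volume : Measure (Set.Icc (0 : ℝ) L))}
    {f g : ℝ → ℝ} (hu : u =ᵐ[volume] fun x => f x) (hv : v =ᵐ[volume] fun x => g x) :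
    inner ℝ u v = ∫ y in Set.Icc 0 L, f y * g y := by
  rw [L2.inner_def, ← integral_subtype measurableSet_Icc]
  refine integral_congr_ae ?_
  filter_upwards [hu, hv] with x hux hvx
  rw [hux, hvx, real_inner_eq_re_inner, RCLike.inner_apply]
  simp [mul_comm]

noncomputable def cosMap (L : ℝ) (j : ℕ) : C(Set.Icc (0 : ℝ) L, ℝ) :=
  ⟨fun x => cos (π * j * x / L), by fun_prop⟩

lemma cosMap_mul (L : ℝ) (i j : ℕ) :
    cosMap L i * cosMap L j =
      (2⁻¹ : ℝ) • cosMap L (i + j) + (2⁻¹ : ℝ) • cosMap L ((i : ℤ) - j).natAbs := by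
  ext x
  simp only [cosMap, ContinuousMap.mul_apply, ContinuousMap.add_apply, ContinuousMap.smul_apply,
    ContinuousMap.coe_mk, smul_eq_mul, Nat.cast_natAbs, Int.cast_abs]
  have hdiff : cos (π * |(((i : ℤ) - j : ℤ) : ℝ)| * x / L) =
      cos (π * i * x / L - π * j * x / L) := by
    rcases abs_choice (((i : ℤ) - j : ℤ) : ℝ) with h | h <;> rw [h] <;> push_cast
    · ring_nf
    · rw [← cos_neg]; ring_nf
  rw [hdiff, Nat.cast_add, show π * (i + j) * x / L = π * i * x / L + π * j * x / L by ring,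
    cos_add, cos_sub]
  ring

lemma cosMap_zero (L : ℝ) : cosMap L 0 = 1 := by
  ext x; simp [cosMap]

noncomputable def cosSubalgebra (L : ℝ) : Subalgebra ℝ C(Set.Icc (0 : ℝ) L, ℝ) :=
  (Submodule.span ℝ (Set.range (cosMap L))).toSubalgebra
    (cosMap_zero L ▸ Submodule.subset_span ⟨0, rfl⟩) fun {f g} hf hg => by
      have hfg := Submodule.mul_mem_mul hf hg
      rw [Submodule.span_mul_span] at hfg
      refine Submodule.span_le.2 ?_ hfg
      rintro _ ⟨_, ⟨i, rfl⟩, _, ⟨j, rfl⟩, rfl⟩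
      change cosMap L i * cosMap L j ∈ _
      rw [cosMap_mul]
      exact add_mem (Submodule.smul_mem _ _ (Submodule.subset_span ⟨_, rfl⟩))
        (Submodule.smul_mem _ _ (Submodule.subset_span ⟨_, rfl⟩))

lemma cosSubalgebra_separatesPoints (hL : 0 < L) : (cosSubalgebra L).SeparatesPoints := by
  intro x y hxy
  refine ⟨_, ⟨cosMap L 1, Submodule.subset_span ⟨1, rfl⟩, rfl⟩, fun h => hxy ?_⟩
  have mem : ∀ t : Set.Icc (0 : ℝ) L, π * (1 : ℕ) * t / L ∈ Set.Icc 0 π := fun t =>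
    ⟨by have := t.2.1; positivity,
      by rw [div_le_iff₀ hL, Nat.cast_one, mul_one]
         exact mul_le_mul_of_nonneg_left t.2.2 pi_pos.le⟩
  have := injOn_cos (mem x) (mem y) h
  rw [div_left_inj' hL.ne', mul_right_inj' (by simp [pi_ne_zero])] at this
  exact Subtype.ext this

lemma dense_cosSubalgebra (hL : 0 < L) : Dense (cosSubalgebra L : Set C(Set.Icc (0 : ℝ) L, ℝ)) := by
  rw [dense_iff_closure_eq, ← Subalgebra.topologicalClosure_coe,
    ContinuousMap.subalgebra_topologicalClosure_eq_top_of_separatesPoints _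
      (cosSubalgebra_separatesPoints hL), Algebra.coe_top]

noncomputable def neumannLp (L : ℝ) (j : ℕ) : Lp ℝ 2 (volume : Measure (Set.Icc (0 : ℝ) L)) :=
  ContinuousMap.toLp 2 volume ℝ ((nu j * √(2 / L)) • cosMap L j)

lemma coeFn_neumannLp (L : ℝ) (j : ℕ) : neumannLp L j =ᵐ[volume] fun x => nfun L j x :=
  ContinuousMap.coeFn_toLp (p := 2) (𝕜 := ℝ) volume _

lemma orthonormal_neumannLp (hL : 0 < L) : Orthonormal ℝ (neumannLp L) := by
  rw [orthonormal_iff_ite]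
  intro i j
  rw [inner_eq_setIntegral_Icc (coeFn_neumannLp L i) (coeFn_neumannLp L j),
    integral_nfun_mul_nfun hL]

lemma dense_span_neumannLp (hL : 0 < L) :
    Dense (Submodule.span ℝ (Set.range (neumannLp L)) :
      Set (Lp ℝ 2 (volume : Measure (Set.Icc (0 : ℝ) L)))) := by
  set T := ContinuousMap.toLp (E := ℝ) 2 (volume : Measure (Set.Icc (0 : ℝ) L)) ℝ
  refine ((ContinuousMap.toLp_denseRange ℝ volume ℝ (by norm_num)).dense_image T.continuous
    (dense_cosSubalgebra hL)).mono ?_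
  rintro _ ⟨f, hf, rfl⟩
  refine Submodule.span_le (p := (Submodule.span ℝ (Set.range (neumannLp L))).comap
    (T : _ →ₗ[ℝ] _)) |>.2 ?_ hf
  rintro _ ⟨j, rfl⟩
  have hc : nu j * √(2 / L) ≠ 0 := by have := nu_pos j; positivity
  have : T (cosMap L j) = (nu j * √(2 / L))⁻¹ • neumannLp L j := by
    rw [neumannLp, map_smul, inv_smul_smul₀ hc]
  rw [SetLike.mem_coe, Submodule.mem_comap, ContinuousLinearMap.coe_coe, this]
  exact Submodule.smul_mem _ _ (Submodule.subset_span ⟨j, rfl⟩)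

noncomputable def neumannBasis (hL : 0 < L) :
    HilbertBasis ℕ ℝ (Lp ℝ 2 (volume : Measure (Set.Icc (0 : ℝ) L))) :=
  HilbertBasis.mk (orthonormal_neumannLp hL)
    (Submodule.dense_iff_topologicalClosure_eq_top.1 (dense_span_neumannLp hL)).ge

lemma coe_neumannBasis (hL : 0 < L) : ⇑(neumannBasis hL) = neumannLp L :=
  HilbertBasis.coe_mk _ _

lemma memLp_shiftedNfun (r z : ℝ) (j : ℕ) :
    MemLp (fun x : Set.Icc (0 : ℝ) L => shiftedNfun r z j x) 2 volume :=
  MemLp.of_bound ((((continuous_nfun r j).comp (continuous_sub_right z)).measurable.indicator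
      measurableSet_Icc).comp measurable_subtype_coe).aestronglyMeasurable
    (√(2 / r)) (ae_of_all _ fun x => abs_shiftedNfun_le r z j x)

theorem hasSum_bcoef_mul_bcoef {r z : ℝ} (hr : 0 < r) (hz : 0 ≤ z) (hzL : z + r ≤ L) (k l : ℕ) :
    HasSum (fun m => bcoef L r z m k * bcoef L r z m l) (if k = l then 1 else 0) := by
  have hL : 0 < L := by linarith
  set F : ℕ → Lp ℝ 2 (volume : Measure (Set.Icc (0 : ℝ) L)) := fun j =>
    (memLp_shiftedNfun r z j).toLp
  have hNF : ∀ m j, inner ℝ (neumannLp L m) (F j) = bcoef L r z m j := fun m j => by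
    rw [inner_eq_setIntegral_Icc (coeFn_neumannLp L m) (memLp_shiftedNfun r z j).coeFn_toLp,
      setIntegral_Icc_mul_shiftedNfun hz hzL hr.le, bcoef]
  have hFF : inner ℝ (F k) (F l) = if k = l then 1 else 0 := by
    rw [inner_eq_setIntegral_Icc (memLp_shiftedNfun r z k).coeFn_toLp
      (memLp_shiftedNfun r z l).coeFn_toLp, setIntegral_Icc_mul_shiftedNfun hz hzL hr.le,
      ← integral_nfun_mul_nfun hr]
    exact setIntegral_congr_fun measurableSet_Icc fun x hx => by rw [shiftedNfun_add z k hx]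
  simpa only [coe_neumannBasis, real_inner_comm (neumannLp L _), hNF, hFF] using
    (neumannBasis hL).hasSum_inner_mul_inner (F k) (F l)

end NeumannBasis

section PartialSums

variable {L r z : ℝ}

def FarMask (α μ : ℝ) (P : ℕ → Prop) (a : ℕ) : Prop :=
  ∀ m, P m → |(a : ℝ) - μ| ≤ |m * α - a|

lemma FarMask.of_le {α M : ℝ} (hα : 0 ≤ α) {a : ℕ} (ha : (a : ℝ) ≤ M * α) :
    FarMask α (M * α) (M ≤ ·) a := fun m hm => by
  rw [abs_of_nonpos (by linarith)]
  exact le_abs.2 (Or.inl (by nlinarith))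

lemma FarMask.of_ge {α M : ℝ} (hα : 0 ≤ α) {a : ℕ} (ha : M * α ≤ a) :
    FarMask α (M * α) (· < M) a := fun m hm => by
  rw [abs_of_nonneg (by linarith)]
  exact le_abs.2 (Or.inr (by nlinarith))

lemma abs_tsum_ite_bcoef_mul_le {δ μ : ℝ} (hδ : δ ∈ Set.Ioo (0 : ℝ) 1) (hr : 0 < r) (hrL : r ≤ L)
    (P : ℕ → Prop) [DecidablePred P] {a : ℕ} (ha : FarMask (r / L) μ P a) (b : ℕ) :
    |∑' m, if P m then bcoef L r z m a * bcoef L r z m b else 0| ≤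
      64 * (1 + 1 / δ) * (1 + |(a : ℝ) - μ|) ^ (δ - 1) := by
  obtain ⟨hδ0, hδ1⟩ := hδ
  have hL : 0 < L := hr.trans_le hrL
  have hα : 0 < r / L := by positivity
  have hα1 : r / L ≤ 1 := (div_le_one hL).2 hrL
  set w := 1 + |(a : ℝ) - μ|
  set U : ℕ → ℕ → ℝ := fun c m => 1 + |m * (r / L) - c|
  obtain ⟨hsa, hta⟩ := summable_and_tsum_mul_rpow_one_add_abs_le hδ0 hα hα1 a
  obtain ⟨hsb, htb⟩ := summable_and_tsum_mul_rpow_one_add_abs_le hδ0 hα hα1 b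
  refine (tsum_of_norm_bounded (f := fun m => if P m then bcoef L r z m a * bcoef L r z m b else 0)
    ((hsa.add hsb).hasSum.mul_left (16 * w ^ (δ - 1))) fun m => ?_).trans ?_
  · split_ifs with hm
    · rw [Real.norm_eq_abs, abs_mul]
      calc |bcoef L r z m a| * |bcoef L r z m b|
          ≤ 4 * √(r / L) / U a m * (4 * √(r / L) / U b m) :=
            mul_le_mul (abs_bcoef_le hr hL z m a) (abs_bcoef_le hr hL z m b) (abs_nonneg _)
              (by positivity)
        _ = 16 * (√(r / L) * √(r / L)) * ((U a m)⁻¹ * (U b m)⁻¹) := by ring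
        _ ≤ 16 * (r / L) * (w ^ (δ - 1) * (U a m ^ (-(1 + δ)) + U b m ^ (-(1 + δ)))) := by
            rw [mul_self_sqrt hα.le]
            exact mul_le_mul_of_nonneg_left (inv_mul_inv_le_rpow_mul hδ0.le hδ1.le
              (by positivity) (by simpa [U, w] using ha m hm) (by positivity)) (by positivity)
        _ = _ := by ring
    · rw [norm_zero]; positivity
  · rw [hsa.tsum_add hsb]
    calc _ ≤ 16 * w ^ (δ - 1) * (2 * (1 + 1 / δ) + 2 * (1 + 1 / δ)) := by
          gcongr
      _ = _ := by ring

lemma summable_abs_bcoef_mul (hr : 0 < r) (hz : 0 ≤ z) (hzL : z + r ≤ L) (k l : ℕ) :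
    Summable fun m => |bcoef L r z m k * bcoef L r z m l| := by
  refine ((hasSum_bcoef_mul_bcoef hr hz hzL k k).summable.add
    (hasSum_bcoef_mul_bcoef hr hz hzL l l).summable).of_nonneg_of_le (fun _ => abs_nonneg _)
    fun m => ?_
  rw [abs_mul]
  nlinarith [sq_nonneg (|bcoef L r z m k| - |bcoef L r z m l|), sq_abs (bcoef L r z m k),
    sq_abs (bcoef L r z m l)]

lemma abs_tsum_ite_bcoef_mul_le_of_compl {δ μ : ℝ} (hδ : δ ∈ Set.Ioo (0 : ℝ) 1) (hr : 0 < r)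
    (hrL : r ≤ L) (hz : 0 ≤ z) (hzL : z + r ≤ L) (P Q : ℕ → Prop) [DecidablePred P]
    [DecidablePred Q] (hPQ : ∀ m, P m ↔ ¬ Q m)
    (hfar : ∀ a, FarMask (r / L) μ P a ∨ FarMask (r / L) μ Q a) {k l : ℕ}
    (hkl : k ≠ l ∨ FarMask (r / L) μ P k) :
    |∑' m, if P m then bcoef L r z m k * bcoef L r z m l else 0| ≤
      64 * (1 + 1 / δ) * ((1 + |(k : ℝ) - μ|) ^ (δ - 1) + (1 + |(l : ℝ) - μ|) ^ (δ - 1)) := by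
  have hC : 0 ≤ 64 * (1 + 1 / δ) := by have := hδ.1; positivity
  have hw : ∀ a : ℕ, 0 ≤ 64 * (1 + 1 / δ) * (1 + |(a : ℝ) - μ|) ^ (δ - 1) := fun a =>
    mul_nonneg hC (by positivity)
  rw [mul_add]
  by_cases hk : FarMask (r / L) μ P k
  · exact (abs_tsum_ite_bcoef_mul_le hδ hr hrL P hk l).trans (le_add_of_nonneg_right (hw l))
  by_cases hl : FarMask (r / L) μ P l
  · simp_rw [mul_comm (bcoef L r z _ k)]
    exact (abs_tsum_ite_bcoef_mul_le hδ hr hrL P hl k).trans (le_add_of_nonneg_left (hw k))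
  -- Otherwise `k ≠ l`, so the two partial sums cancel and `k` is far from the other mask.
  have hmask : ∀ (R : ℕ → Prop) [DecidablePred R],
      Summable fun m => if R m then bcoef L r z m k * bcoef L r z m l else 0 := fun R _ =>
    (summable_abs_bcoef_mul hr hz hzL k l).of_norm_bounded fun m => by
      split_ifs
      · exact le_rfl
      · rw [norm_zero]; exact abs_nonneg _
  have hsplit := (hasSum_bcoef_mul_bcoef hr hz hzL k l).tsum_eq
  rw [if_neg (hkl.resolve_right hk), ← tsum_congr fun m => ?_,
    Summable.tsum_add (hmask P) (hmask Q)] at hsplit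
  · rw [eq_neg_of_add_eq_zero_left hsplit, abs_neg]
    exact (abs_tsum_ite_bcoef_mul_le hδ hr hrL Q ((hfar k).resolve_left hk) l).trans
      (le_add_of_nonneg_right (hw l))
  · by_cases hm : P m
    · simp [hm, (hPQ m).1 hm]
    · simp [hm, not_not.1 (mt (hPQ m).2 hm)]

end PartialSums

/-- Tail and head bounds for `∑_m b_{m,k}^z b_{m,l}^z`: for every `δ ∈ (0,1)` there is
`C > 0` such that for all `L ≥ r ≥ 1`, `z ∈ [0, L − r]`, `M ∈ [0,∞)` and `k, l ∈ ℕ₀`: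
(i) if `k ≠ l`, or `k = l` and `k ≤ rM/L`, then
`|∑_{m ≥ M} b_{m,k}^z b_{m,l}^z| ≤ C [(1+|k−rM/L|)^{δ−1} + (1+|l−rM/L|)^{δ−1}]`, and
(ii) if `k ≠ l`, or `k = l` and `k ≥ rM/L`, then the same bound holds for
`|∑_{m < M} b_{m,k}^z b_{m,l}^z|`. -/
theorem bcoef_partial_sum_bounds (δ : ℝ) (hδ : δ ∈ Set.Ioo (0 : ℝ) 1) :
    ∃ C : ℝ, 0 < C ∧ ∀ (L r z M : ℝ) (k l : ℕ),
      1 ≤ r → r ≤ L → z ∈ Set.Icc 0 (L - r) → 0 ≤ M →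
      ((k ≠ l ∨ (k : ℝ) ≤ r * M / L) →
        |∑' m : ℕ, if M ≤ (m : ℝ) then bcoef L r z m k * bcoef L r z m l else 0| ≤
          C * ((1 + |(k : ℝ) - r * M / L|) ^ (δ - 1) +
               (1 + |(l : ℝ) - r * M / L|) ^ (δ - 1))) ∧
      ((k ≠ l ∨ r * M / L ≤ (k : ℝ)) →
        |∑' m : ℕ, if (m : ℝ) < M then bcoef L r z m k * bcoef L r z m l else 0| ≤
          C * ((1 + |(k : ℝ) - r * M / L|) ^ (δ - 1) +
               (1 + |(l : ℝ) - r * M / L|) ^ (δ - 1))) := by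
  refine ⟨64 * (1 + 1 / δ), by have := hδ.1; positivity, ?_⟩
  intro L r z M k l hr hrL hz _
  have hr0 : 0 < r := by linarith
  have hzL : z + r ≤ L := by linarith [hz.2]
  have hα : 0 ≤ r / L := div_nonneg hr0.le (hr0.le.trans hrL)
  rw [show r * M / L = M * (r / L) by ring]
  have hfar : ∀ a : ℕ, FarMask (r / L) (M * (r / L)) (M ≤ ·) a ∨
      FarMask (r / L) (M * (r / L)) (· < M) a := fun a =>
    (le_total (a : ℝ) (M * (r / L))).imp (FarMask.of_le hα) (FarMask.of_ge hα)
  exact ⟨fun hkl => abs_tsum_ite_bcoef_mul_le_of_compl hδ hr0 hrL hz.1 hzL _ _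
      (fun _ => not_lt.symm) hfar (hkl.imp_right (FarMask.of_le hα)),
    fun hkl => abs_tsum_ite_bcoef_mul_le_of_compl hδ hr0 hrL hz.1 hzL _ _
      (fun _ => not_le.symm) (fun a => (hfar a).symm) (hkl.imp_right (FarMask.of_ge hα))⟩
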